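/- Let G be a semi-Markovian DAG satisfying Assumption 1. Let x_t ∈ X^(o) be a node that has either a directed edge x_t → t or a bi-directed edge to t (i.e., some unobserved node u with edges u → x_t and u → t), and let Z ⊆ X^(o) \ {x_t}. If Z does not satisfy the back-door criterion relative to (t, y) in G, then there exists a path between x_t and y in G that is not blocked by Z ∪ {t}. -/

import Mathlib

/-!
Under Assumption 1 the only descendant of `t` is `y`, so a failure of the back-door criterion
yields a path `t ← w ⋯ y` not blocked by `Z`, and, `t` being its first node, not blocked by
`Z ∪ {t}` either. If `x_t` lies on this path, its tail from `x_t` works. Otherwise prepend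
`x_t → t` or `x_t ← u → t`: the node `t` becomes a collider lying in `Z ∪ {t}`, and `u` an
unobserved non-collider outside `Z ∪ {t}`. The node `u` cannot already lie on the path, since its
two neighbours there would be its only children, one of them `x_t`.

Whether a path is blocked depends only on its consecutive triples of nodes, so the triples
inherited from the original path still do not block.
-/

namespace CausalDAG

variable {V : Type*}

/-- Adjacency: an edge between `u` and `v` in either direction. -/
def Adj (E : V → V → Prop) (u v : V) : Prop := E u v ∨ E v u

/-- `d` is a descendant of `v`: there is a directed path from `v` to `d`. -/
def Descendant (E : V → V → Prop) (v d : V) : Prop := Relation.TransGen E v d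

/-- The directed graph with edge relation `E` is acyclic. -/
def Acyclic (E : V → V → Prop) : Prop := ∀ v, ¬ Relation.TransGen E v v

/-- A path between `a` and `b` in the graph with edge relation `E`:
a sequence of at least two distinct nodes, starting at `a`, ending at `b`,
with consecutive nodes joined by an edge (in either direction). -/
structure GPath (E : V → V → Prop) (a b : V) where
  nodes : List V
  nodup : nodes.Nodup
  two_le : 2 ≤ nodes.length
  head_eq : nodes.head? = some a
  last_eq : nodes.getLast? = some b
  chain : nodes.Chain' (Adj E)

namespace GPath

variable {E : V → V → Prop} {a b : V}

/-- `i` is an interior position of the path. -/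
def Interior (p : GPath E a b) (i : ℕ) : Prop := 0 < i ∧ i + 1 < p.nodes.length

/-- The node at interior position `i` is a collider on the path: both adjacent
edges of the path point into it. -/
def ColliderAt (p : GPath E a b) (i : ℕ) : Prop :=
  ∃ x v z, p.nodes[(i - 1)]? = some x ∧ p.nodes[i]? = some v ∧
    p.nodes[(i + 1)]? = some z ∧ E x v ∧ E z v

/-- The path is blocked by the set `S`. -/
def BlockedBy (p : GPath E a b) (S : Set V) : Prop :=
  ∃ i v, p.Interior i ∧ p.nodes[i]? = some v ∧
    ((¬ p.ColliderAt i ∧ v ∈ S) ∨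
      (p.ColliderAt i ∧ v ∉ S ∧ ∀ d, Descendant E v d → d ∉ S))

/-- The path contains the directed edge `u → v` as one of its steps. -/
def UsesEdge (p : GPath E a b) (u v : V) : Prop :=
  E u v ∧ ∃ i, (p.nodes[i]? = some u ∧ p.nodes[(i + 1)]? = some v) ∨
    (p.nodes[i]? = some v ∧ p.nodes[(i + 1)]? = some u)

/-- The path contains an edge pointing into its first endpoint. -/
def IntoFirst (p : GPath E a b) : Prop :=
  ∃ w, p.nodes[1]? = some w ∧ E w a

end GPath

/-- `a` and `b` are d-separated by `S`: every path between them is blocked by `S`. -/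
def DSep (E : V → V → Prop) (a b : V) (S : Set V) : Prop :=
  ∀ p : GPath E a b, p.BlockedBy S

/-- `Z` satisfies the back-door criterion relative to `(t, y)`: no node of `Z` is a
descendant of `t`, and `Z` blocks every path between `t` and `y` containing an edge
pointing into `t`. -/
def BackDoor (E : V → V → Prop) (t y : V) (Z : Set V) : Prop :=
  (∀ z ∈ Z, ¬ Descendant E t z) ∧
  ∀ p : GPath E t y, p.IntoFirst → p.BlockedBy Z

/-- A semi-Markovian DAG: observed features `Xo`, unobserved features `Xu`,
treatment `t`, outcome `y`; unobserved nodes have no parents and at most two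
children. -/
structure SemiMarkov (V : Type*) where
  E : V → V → Prop
  Xo : Set V
  Xu : Set V
  t : V
  y : V
  acyclic : Acyclic E
  t_ne_y : t ≠ y
  t_notin : t ∉ Xo ∪ Xu
  y_notin : y ∉ Xo ∪ Xu
  disjoint : Disjoint Xo Xu
  cover : ∀ v, v ∈ Xo ∨ v ∈ Xu ∨ v = t ∨ v = y
  unobs_no_parents : ∀ u ∈ Xu, ∀ w, ¬ E w u
  unobs_children : ∀ u ∈ Xu, ∃ a b, ∀ c, E u c → c = a ∨ c = b

/-- Assumption 1: `y` is the only child of `t`, and `y` has no children. -/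
def Assumption1 (M : SemiMarkov V) : Prop :=
  M.E M.t M.y ∧ (∀ w, M.E M.t w → w = M.y) ∧ ∀ w, ¬ M.E M.y w

/-- Edge relation of the sub-sampled graph `G_e`: a new node `e` (represented by
`none`) is added, together with the edge `x_t → e` and an edge `v → e` for each
`v ∈ V0`. -/
def subEdge (E : V → V → Prop) (xt : V) (V0 : Set V) :
    Option V → Option V → Prop
  | some u, some v => E u v
  | some u, none => u = xt ∨ u ∈ V0
  | none, _ => False

end CausalDAG

theorem List.triple_infix_iff {α : Type*} {l : List α} {x v z : α} :
    [x, v, z] <:+: l ↔ ∃ k, l[k]? = some x ∧ l[k + 1]? = some v ∧ l[k + 2]? = some z := by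
  rw [List.infix_iff_getElem?]
  constructor
  · rintro ⟨k, -, h⟩
    exact ⟨k, by simpa using h 0, by simpa [add_comm] using h 1, by simpa [add_comm] using h 2⟩
  · rintro ⟨k, hx, hv, hz⟩
    refine ⟨k, ?_, fun i hi => ?_⟩
    · have := (List.getElem?_eq_some_iff.mp hz).1
      simp only [List.length_cons, List.length_nil]
      omega
    · simp only [List.length_cons, List.length_nil] at hi
      interval_cases i <;> simpa [add_comm]

namespace CausalDAG

variable {V : Type*}

def SegmentBlockedBy (E : V → V → Prop) (x v z : V) (S : Set V) : Prop :=
  (¬ (E x v ∧ E z v) ∧ v ∈ S) ∨ ((E x v ∧ E z v) ∧ v ∉ S ∧ ∀ d, Descendant E v d → d ∉ S)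

section Segment

variable {E : V → V → Prop} {x v z : V} {S : Set V}

theorem SegmentBlockedBy.of_union_singleton {c : V} (h : SegmentBlockedBy E x v z (S ∪ {c}))
    (hvc : v ≠ c) : SegmentBlockedBy E x v z S := by
  rcases h with ⟨hnc, hv⟩ | ⟨hc, hv, hd⟩
  · exact Or.inl ⟨hnc, hv.resolve_right hvc⟩
  · exact Or.inr ⟨hc, fun h => hv (Or.inl h), fun d hvd hd' => hd d hvd (Or.inl hd')⟩

theorem not_segmentBlockedBy_of_collider (hx : E x v) (hz : E z v) (hv : v ∈ S) :
    ¬ SegmentBlockedBy E x v z S := by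
  rintro (⟨hnc, -⟩ | ⟨-, hv', -⟩)
  · exact hnc ⟨hx, hz⟩
  · exact hv' hv

theorem not_segmentBlockedBy_of_not_mem (hx : ¬ E x v) (hv : v ∉ S) :
    ¬ SegmentBlockedBy E x v z S := by
  rintro (⟨-, hv'⟩ | ⟨⟨hx', -⟩, -⟩)
  · exact hv hv'
  · exact hx hx'

end Segment

theorem eq_of_descendant {E : V → V → Prop} {t y d : V} (ht : ∀ w, E t w → w = y)
    (hy : ∀ w, ¬ E y w) (hd : Descendant E t d) : d = y := by
  induction hd with
  | single h => exact ht _ h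
  | tail _ h ih => exact absurd (ih ▸ h) (hy _)

namespace GPath

variable {E : V → V → Prop} {a b : V} {S : Set V}

theorem getElem?_zero (p : GPath E a b) : p.nodes[0]? = some a := by
  rw [← List.head?_eq_getElem?]
  exact p.head_eq

theorem blockedBy_iff {p : GPath E a b} :
    p.BlockedBy S ↔ ∃ x v z, [x, v, z] <:+: p.nodes ∧ SegmentBlockedBy E x v z S := by
  have collider_iff : ∀ {i x v z}, p.nodes[i - 1]? = some x → p.nodes[i]? = some v →
      p.nodes[i + 1]? = some z → (p.ColliderAt i ↔ E x v ∧ E z v) := by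
    intro i x v z hx hv hz
    simp [ColliderAt, hx, hv, hz]
  simp only [List.triple_infix_iff]
  constructor
  · rintro ⟨i, v, ⟨hi0, hi⟩, hv, hblk⟩
    have hx : p.nodes[i - 1]? = some p.nodes[i - 1] := List.getElem?_eq_getElem _
    have hz : p.nodes[i + 1]? = some p.nodes[i + 1] := by simp [hi]
    refine ⟨_, v, _, ⟨i - 1, hx, by rwa [Nat.sub_add_cancel hi0], by
      rwa [show i - 1 + 2 = i + 1 by omega]⟩, ?_⟩
    rwa [collider_iff hx hv hz] at hblk
  · rintro ⟨x, v, z, ⟨k, hx, hv, hz⟩, hblk⟩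
    refine ⟨k + 1, v, ⟨k.succ_pos, (List.getElem?_eq_some_iff.mp hz).1⟩, hv, ?_⟩
    rwa [collider_iff (by rwa [Nat.add_sub_cancel]) hv hz]

theorem BlockedBy.of_union_source {p : GPath E a b} (h : p.BlockedBy (S ∪ {a})) :
    p.BlockedBy S := by
  rw [blockedBy_iff] at h ⊢
  obtain ⟨x, v, z, hinf, hblk⟩ := h
  refine ⟨x, v, z, hinf, hblk.of_union_singleton fun hva => ?_⟩
  subst hva
  obtain ⟨k, -, hv, -⟩ := List.triple_infix_iff.mp hinf
  have := (List.getElem?_inj (List.getElem?_eq_some_iff.mp hv).1 p.nodup).mp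
    (hv.trans p.getElem?_zero.symm)
  omega

theorem BlockedBy.of_infix {p : GPath E a b} {c d : V} {q : GPath E c d}
    (hqp : q.nodes <:+: p.nodes) (h : q.BlockedBy S) : p.BlockedBy S := by
  rw [blockedBy_iff] at h ⊢
  obtain ⟨x, v, z, hinf, hblk⟩ := h
  exact ⟨x, v, z, hinf.trans hqp, hblk⟩

theorem exists_suffix (p : GPath E a b) {c : V} (hc : c ∈ p.nodes) (hcb : c ≠ b) :
    ∃ q : GPath E c b, q.nodes <:+ p.nodes := by
  obtain ⟨s, t, hst⟩ := List.append_of_mem hc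
  have hsuf : c :: t <:+ p.nodes := by
    rw [hst]
    exact List.suffix_append s (c :: t)
  have hlast : (c :: t).getLast? = some b := by
    rw [← p.last_eq, hst, List.getLast?_append, List.getLast?_cons]
    rfl
  have ht : t ≠ [] := by
    rintro rfl
    exact hcb (Option.some.inj hlast)
  refine ⟨⟨c :: t, p.nodup.sublist hsuf.sublist, ?_, rfl, hlast, p.chain.infix hsuf.isInfix⟩,
    hsuf⟩
  have := List.length_pos_iff.mpr ht
  simp only [List.length_cons]
  omega

def cons (p : GPath E a b) (x : V) (hadj : Adj E x a) (hx : x ∉ p.nodes) : GPath E x b where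
  nodes := x :: p.nodes
  nodup := List.nodup_cons.mpr ⟨hx, p.nodup⟩
  two_le := by have := p.two_le; simp only [List.length_cons]; omega
  head_eq := rfl
  last_eq := by
    rw [List.getLast?_cons, p.last_eq]
    rfl
  chain := List.isChain_cons.mpr ⟨fun z hz => by
    cases p.head_eq ▸ hz
    exact hadj, p.chain⟩

theorem BlockedBy.of_cons {p : GPath E a b} {x z : V} {hadj : Adj E x a} {hx : x ∉ p.nodes}
    (hz : p.nodes[1]? = some z) (h : (p.cons x hadj hx).BlockedBy S) :
    SegmentBlockedBy E x a z S ∨ p.BlockedBy S := by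
  obtain ⟨rest, hrest⟩ : ∃ rest, p.nodes = a :: z :: rest := by
    have h0 := p.getElem?_zero
    rcases hl : p.nodes with _ | ⟨_, _ | ⟨_, rest⟩⟩ <;> simp_all
  rw [blockedBy_iff] at h ⊢
  obtain ⟨x', v, z', hinf, hblk⟩ := h
  rcases List.infix_cons_iff.mp hinf with hpre | hinf
  · rw [hrest] at hpre
    obtain ⟨rfl, rfl, rfl⟩ : x' = x ∧ v = a ∧ z' = z := by
      simpa [List.cons_prefix_cons] using hpre
    exact Or.inl hblk
  · exact Or.inr ⟨x', v, z', hinf, hblk⟩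

theorem exists_infix_of_mem (p : GPath E a b) {u : V} (hu : u ∈ p.nodes) (hua : u ≠ a)
    (hub : u ≠ b) : ∃ x z, [x, u, z] <:+: p.nodes := by
  obtain ⟨j, hj⟩ := List.mem_iff_getElem?.mp hu
  have hjlt := (List.getElem?_eq_some_iff.mp hj).1
  have hj0 : j ≠ 0 := by
    rintro rfl
    exact hua (Option.some.inj (hj.symm.trans p.getElem?_zero))
  have hjlast : j + 1 ≠ p.nodes.length := by
    intro h
    have hl := p.last_eq
    rw [List.getLast?_eq_getElem?, show p.nodes.length - 1 = j by omega, hj] at hl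
    exact hub (Option.some.inj hl)
  refine ⟨p.nodes[j - 1], p.nodes[j + 1], List.triple_infix_iff.mpr ⟨j - 1, ?_, ?_, ?_⟩⟩
  · exact List.getElem?_eq_getElem _
  · rwa [Nat.sub_add_cancel (Nat.pos_of_ne_zero hj0)]
  · rw [show j - 1 + 2 = j + 1 by omega]
    exact List.getElem?_eq_getElem _

theorem mem_nodes_of_child {p : GPath E a b} {u c : V} (hu : u ∈ p.nodes) (hua : u ≠ a)
    (hub : u ≠ b) (hpar : ∀ w, ¬ E w u) (hch : ∃ c₁ c₂, ∀ c, E u c → c = c₁ ∨ c = c₂)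
    (hc : E u c) : c ∈ p.nodes := by
  obtain ⟨x, z, hinf⟩ := p.exists_infix_of_mem hu hua hub
  have hchain : [x, u, z].IsChain (Adj E) := p.chain.infix hinf
  have hux : E u x := ((List.isChain_cons_cons.mp hchain).1).resolve_left (hpar x)
  have huz : E u z :=
    (List.isChain_pair.mp (List.isChain_cons_cons.mp hchain).2).resolve_right (hpar z)
  have hxz : x ≠ z := by
    have := p.nodup.sublist hinf.sublist
    simp_all
  obtain ⟨c₁, c₂, hch⟩ := hch
  have hcxz : c = x ∨ c = z := by
    rcases hch x hux with rfl | rfl <;> rcases hch z huz with rfl | rfl <;>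
      rcases hch c hc with rfl | rfl <;> simp_all
  exact hinf.subset (by rcases hcxz with rfl | rfl <;> simp)

end GPath

end CausalDAG

open CausalDAG in
theorem stmt6_general {V : Type*} (M : SemiMarkov V)
    (hA1 : Assumption1 M)
    (xt : V) (hxt : xt ∈ M.Xo)
    (hedge : M.E xt M.t ∨ ∃ u ∈ M.Xu, M.E u xt ∧ M.E u M.t)
    (Z : Set V) (hZ : Z ⊆ M.Xo \ {xt})
    (hnb : ¬ BackDoor M.E M.t M.y Z) :
    ∃ p : GPath M.E xt M.y, ¬ p.BlockedBy (Z ∪ {M.t}) := by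
  obtain ⟨-, ht_child, hy_sink⟩ := hA1
  have hZ_desc : ∀ z ∈ Z, ¬ Descendant M.E M.t z := fun z hz hd =>
    M.y_notin (Or.inl (eq_of_descendant ht_child hy_sink hd ▸ (hZ hz).1))
  obtain ⟨p, ⟨w, hw, hwt⟩, hp⟩ : ∃ p : GPath M.E M.t M.y, p.IntoFirst ∧ ¬ p.BlockedBy Z := by
    by_contra! h
    exact hnb ⟨hZ_desc, h⟩
  replace hp : ¬ p.BlockedBy (Z ∪ {M.t}) := fun h => hp h.of_union_source
  by_cases hxp : xt ∈ p.nodes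
  · obtain ⟨q, hqp⟩ := p.exists_suffix hxp fun h => M.y_notin (Or.inl (h ▸ hxt))
    exact ⟨q, fun h => hp (h.of_infix hqp.isInfix)⟩
  rcases hedge with hxt_t | ⟨u, hu, hu_xt, hu_t⟩
  · refine ⟨p.cons xt (Or.inl hxt_t) hxp, fun h => ?_⟩
    rcases h.of_cons hw with h | h
    · exact not_segmentBlockedBy_of_collider hxt_t hwt (Or.inr rfl) h
    · exact hp h
  have hup : u ∉ p.nodes := fun h => hxp <| GPath.mem_nodes_of_child h
    (fun h => M.t_notin (Or.inr (h ▸ hu))) (fun h => M.y_notin (Or.inr (h ▸ hu)))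
    (M.unobs_no_parents u hu) (M.unobs_children u hu) hu_xt
  have hxq : xt ∉ (p.cons u (Or.inl hu_t) hup).nodes := by
    rintro (_ | ⟨_, h⟩)
    · exact Set.disjoint_left.mp M.disjoint hxt hu
    · exact hxp h
  refine ⟨(p.cons u (Or.inl hu_t) hup).cons xt (Or.inr hu_xt) hxq, fun h => ?_⟩
  rcases h.of_cons p.getElem?_zero with h | h
  · refine not_segmentBlockedBy_of_not_mem (M.unobs_no_parents u hu xt) ?_ h
    rintro (hZu | rfl)
    · exact Set.disjoint_left.mp M.disjoint (hZ hZu).1 hu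
    · exact M.t_notin (Or.inr hu)
  rcases h.of_cons hw with h | h
  · exact not_segmentBlockedBy_of_collider hu_t hwt (Or.inr rfl) h
  · exact hp h

open CausalDAG in
/-- if `Z` does not satisfy the back-door criterion, then there is a
path between `x_t` and `y` in `G` not blocked by `Z ∪ {t}`. -/
theorem stmt6 {V : Type*} [Finite V] (M : SemiMarkov V)
    (hA1 : Assumption1 M)
    (xt : V) (hxt : xt ∈ M.Xo)
    (hedge : M.E xt M.t ∨ ∃ u ∈ M.Xu, M.E u xt ∧ M.E u M.t)
    (Z : Set V) (hZ : Z ⊆ M.Xo \ {xt})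
    (hnb : ¬ BackDoor M.E M.t M.y Z) :
    ∃ p : GPath M.E xt M.y, ¬ p.BlockedBy (Z ∪ {M.t}) :=
  stmt6_general M hA1 xt hxt hedge Z hZ hnb
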